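/- arXiv:1511.07050 — 2 statements merged into one kernel-verified Lean document; each statement's English description precedes it below -/
import Mathlib

section
/- For the Benjamini–Hochberg step-up test with critical values α_i = iα/m applied to p-values (p_1,…,p_m), the false discovery rate FDR = E[V/max(R,1)] satisfies FDR ≤ (m_0/m)·α, where m_0 is the number of true null hypotheses. -/
open MeasureTheory ProbabilityTheory Finset
open scoped Classical
noncomputable section

/-- `#{i : p i ≤ t}`, i.e. `m·F̂_m(t)`. -/
def countLE {m : ℕ} (p : Fin m → ℝ) (t : ℝ) : ℕ :=
  (Finset.univ.filter (fun i => p i ≤ t)).card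

/-- The `i`-th order statistic `p_{i:m}` (for `1 ≤ i ≤ m`), characterized by
`p_{i:m} ≤ t ↔ i ≤ #{k : p k ≤ t}`. -/
def orderStat {m : ℕ} (p : Fin m → ℝ) (i : ℕ) : ℝ :=
  sInf {t | i ≤ countLE p t}

/-- Step-up rejection number `R = max {j : p_{j:m} ≤ α_j}` (`max ∅ = 0`). -/
def suR {m : ℕ} (α : ℕ → ℝ) (p : Fin m → ℝ) : ℕ :=
  (((Finset.range (m+1)).filter (fun j => 1 ≤ j ∧ orderStat p j ≤ α j)).max).unbotD 0

/-- Step-down rejection number `R = max {j : p_{i:m} ≤ α_i for all i ≤ j}`. -/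
def sdR {m : ℕ} (α : ℕ → ℝ) (p : Fin m → ℝ) : ℕ :=
  (((Finset.range (m+1)).filter
    (fun j => ∀ i ∈ Finset.Icc 1 j, orderStat p i ≤ α i)).max).unbotD 0

/-- FDR `= E[V / max(R,1)]` for rejection number `R` and rejection rule `rej`. -/
def FDR {Ω : Type*} [MeasurableSpace Ω] (μ : Measure Ω) {m : ℕ}
    (p : Ω → Fin m → ℝ) (I0 : Finset (Fin m))
    (R : (Fin m → ℝ) → ℕ) (rej : (Fin m → ℝ) → Fin m → Prop) : ℝ :=
  ∫ ω, ((I0.filter (fun i => rej (p ω) i)).card : ℝ) / (max (R (p ω)) 1 : ℕ) ∂μ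

/-- FDR of the step-up test with critical values `α`. -/
def suFDR {Ω : Type*} [MeasurableSpace Ω] (μ : Measure Ω) {m : ℕ}
    (α : ℕ → ℝ) (p : Ω → Fin m → ℝ) (I0 : Finset (Fin m)) : ℝ :=
  FDR μ p I0 (suR α) (fun q i => q i ≤ α (suR α q))

/-- FDR of the step-down test with critical values `α`
(rejecting the hypotheses belonging to `p_{i:m}`, `i ≤ R`). -/
def sdFDR {Ω : Type*} [MeasurableSpace Ω] (μ : Measure Ω) {m : ℕ}
    (α : ℕ → ℝ) (p : Ω → Fin m → ℝ) (I0 : Finset (Fin m)) : ℝ :=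
  FDR μ p I0 (sdR α) (fun q i => 1 ≤ sdR α q ∧ q i ≤ orderStat q (sdR α q))

/-- Benjamini–Hochberg critical values `b_j = jα/m`. -/
def bh (m : ℕ) (α : ℝ) (j : ℕ) : ℝ := j * α / m

/-- The uniform distribution on `[0,1]`. -/
def unif01 : Measure ℝ := volume.restrict (Set.Icc 0 1)

/-!
Replacing `p i` by `0` gives a rejection count `R⁽ⁱ⁾` that depends only on the other p-values.
Since lowering one p-value can only raise `R`, and does not change it while `p i` stays below the
critical value of the new `R`, `{H_i rejected, R = k} = {p i ≤ α_k, R⁽ⁱ⁾ = k}` for `k ≥ 1`. Hence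
`V / (R ∨ 1) = ∑_{i ∈ I₀} ∑_k 1{p i ≤ α_k, R⁽ⁱ⁾ = k} / k`, and independence of `p i` and `R⁽ⁱ⁾`
gives `FDR = ∑_{i ∈ I₀} ∑_k P(p i ≤ α_k) P(R⁽ⁱ⁾ = k) / k`. For BH, `P(p i ≤ α_k) / k ≤ α / m`,
and the events `{R⁽ⁱ⁾ = k}` are disjoint, so every true null contributes at most `α / m`.
-/

open Function

namespace Finset

lemma max_unbotD_eq_sup_id (s : Finset ℕ) : s.max.unbotD 0 = s.sup id := by
  rcases s.eq_empty_or_nonempty with rfl | hs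
  · rfl
  · rw [← coe_max' hs, WithBot.unbotD_coe, max'_eq_sup', sup'_eq_sup]

end Finset

section StepUp

variable {m : ℕ}

lemma countLE_mono (q : Fin m → ℝ) : Monotone (countLE q) := fun _ _ hst =>
  card_le_card (monotone_filter_right _ fun _ _ hi => hi.trans hst)

lemma countLE_antitone (t : ℝ) : Antitone fun q : Fin m → ℝ => countLE q t := fun _ _ hq =>
  card_le_card (monotone_filter_right _ fun i _ hi => (hq i).trans hi)

lemma countLE_update_of_le {q : Fin m → ℝ} {i : Fin m} {t c : ℝ} (hc : c ≤ t) (hi : q i ≤ t) :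
    countLE (update q i c) t = countLE q t := by
  unfold countLE
  congr 1
  refine filter_congr fun j _ => ?_
  rcases eq_or_ne j i with rfl | hj
  · simp [hc, hi]
  · simp [update_of_ne hj]

/-- `{t | j ≤ countLE q t}` is closed and bounded below, so it contains its infimum. -/
lemma orderStat_le_iff {q : Fin m → ℝ} {j : ℕ} (hj : 1 ≤ j) (hjm : j ≤ m) (t : ℝ) :
    orderStat q j ≤ t ↔ j ≤ countLE q t := by
  set S := {s | j ≤ countLE q s}
  have hS : S = ⋃ (A : Finset (Fin m)) (_ : #A = j), ⋂ i ∈ A, Set.Ici (q i) := by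
    ext s
    simp only [S, Set.mem_ofPred_eq, Set.mem_iUnion, Set.mem_iInter, Set.mem_Ici, countLE]
    constructor
    · intro h
      obtain ⟨A, hA, rfl⟩ := exists_subset_card_eq h
      exact ⟨A, rfl, fun i hi => (mem_filter.1 (hA hi)).2⟩
    · rintro ⟨A, rfl, hA⟩
      exact card_le_card fun i hi => mem_filter.2 ⟨mem_univ i, hA i hi⟩
  have hclosed : IsClosed S := by
    rw [hS]
    exact isClosed_iUnion_of_finite fun A => isClosed_iUnion_of_finite fun _ =>
      isClosed_biInter fun i _ => isClosed_Ici
  obtain ⟨b, hb⟩ := (Set.finite_range q).bddBelow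
  obtain ⟨c, hc⟩ := (Set.finite_range q).bddAbove
  have hSne : S.Nonempty := ⟨c, by
    simpa [S, countLE, filter_true_of_mem fun i _ => hc (Set.mem_range_self i)] using hjm⟩
  have hSbdd : BddBelow S := ⟨b, fun s hs => by
    obtain ⟨i, hi⟩ := card_pos.1 (lt_of_lt_of_le hj hs)
    exact (hb (Set.mem_range_self i)).trans (mem_filter.1 hi).2⟩
  exact ⟨fun h => (hclosed.csInf_mem hSne hSbdd).trans (countLE_mono q h),
    fun h => csInf_le hSbdd h⟩

/-- The index `0` always qualifies, which absorbs both the condition `1 ≤ j` and the convention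
`max ∅ = 0` of `suR`. -/
lemma suR_eq_sup (α : ℕ → ℝ) (q : Fin m → ℝ) :
    suR α q = (range (m + 1)).sup fun j => if j ≤ countLE q (α j) then j else 0 := by
  rw [suR, Finset.max_unbotD_eq_sup_id]
  refine le_antisymm (Finset.sup_le fun j hj => ?_) (Finset.sup_le fun j hj => ?_)
  · obtain ⟨hjm, hj1, hjα⟩ : j < m + 1 ∧ 1 ≤ j ∧ orderStat q j ≤ α j := by
      simpa using hj
    refine le_sup_of_le (mem_range.2 hjm) ?_
    rw [if_pos ((orderStat_le_iff hj1 (by omega) _).1 hjα), id]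
  · split_ifs with hjα
    · rcases Nat.eq_zero_or_pos j with rfl | hj1
      · exact Nat.zero_le _
      · have hjm := Nat.lt_succ_iff.1 (mem_range.1 hj)
        exact le_sup (f := id) (mem_filter.2 ⟨hj, hj1, (orderStat_le_iff hj1 hjm _).2 hjα⟩)
    · exact Nat.zero_le _

variable {α : ℕ → ℝ} {q : Fin m → ℝ}

lemma le_suR {j : ℕ} (hjm : j ≤ m) (h : j ≤ countLE q (α j)) : j ≤ suR α q := by
  rw [suR_eq_sup]
  exact le_sup_of_le (mem_range.2 (Nat.lt_succ_of_le hjm)) (by rw [if_pos h])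

lemma suR_le (α : ℕ → ℝ) (q : Fin m → ℝ) : suR α q ≤ m := by
  rw [suR_eq_sup]
  refine Finset.sup_le fun j hj => ?_
  split_ifs
  exacts [Nat.lt_succ_iff.1 (mem_range.1 hj), Nat.zero_le m]

lemma suR_le_countLE (α : ℕ → ℝ) (q : Fin m → ℝ) : suR α q ≤ countLE q (α (suR α q)) := by
  obtain ⟨j, -, hj⟩ := exists_mem_eq_sup (range (m + 1)) nonempty_range_add_one
    fun j => if j ≤ countLE q (α j) then j else 0
  rw [← suR_eq_sup] at hj
  split_ifs at hj with h
  · rwa [hj]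
  · exact hj ▸ Nat.zero_le _

lemma measurable_countLE (t : ℝ) : Measurable fun q : Fin m → ℝ => countLE q t := by
  simp_rw [countLE, card_filter]
  exact Finset.measurable_sum _ fun i _ =>
    Measurable.ite (measurable_pi_apply i measurableSet_Iic) measurable_const measurable_const

lemma measurable_suR (α : ℕ → ℝ) : Measurable (suR α : (Fin m → ℝ) → ℕ) := by
  simp_rw [funext (suR_eq_sup α), ← sup'_eq_sup nonempty_range_add_one]
  exact Finset.measurable_range_sup'' fun j _ =>
    Measurable.ite (measurable_countLE (α j) measurableSet_Ici) measurable_const measurable_const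

lemma suR_antitone (α : ℕ → ℝ) : Antitone (suR α : (Fin m → ℝ) → ℕ) := fun _ _ hq =>
  le_suR (suR_le α _) ((suR_le_countLE α _).trans (countLE_antitone _ hq))

lemma one_le_suR_of_le (hα : Monotone α) {i : Fin m} (h : q i ≤ α (suR α q)) :
    1 ≤ suR α q := by
  by_contra! h0
  rw [Nat.lt_one_iff.1 h0] at h
  have : 1 ≤ countLE q (α 1) := card_pos.2 ⟨i, mem_filter.2 ⟨mem_univ i, h.trans (hα zero_le_one)⟩⟩
  exact h0.not_ge (le_suR i.pos this)

lemma suR_update_zero_eq_iff (hα : Monotone α) {i : Fin m} {k : ℕ} (hqi : 0 ≤ q i)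
    (hk₀ : 0 ≤ α k) (hk : q i ≤ α k) :
    suR α (update q i 0) = k ↔ suR α q = k := by
  set R' := suR α (update q i 0)
  have hle : suR α q ≤ R' := suR_antitone α (update_le_self_iff.2 hqi)
  suffices h : 0 ≤ α R' → q i ≤ α R' → suR α q = R' by
    refine ⟨fun hR' => (h (hR' ▸ hk₀) (hR' ▸ hk)).trans hR', fun hR => ?_⟩
    have hαk : α k ≤ α R' := hα (hR ▸ hle)
    exact (h (hk₀.trans hαk) (hk.trans hαk)).symm.trans hR
  intro hR'₀ hR'
  refine le_antisymm hle (le_suR (suR_le α _) ?_)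
  rw [← countLE_update_of_le hR'₀ hR']
  exact suR_le_countLE α _

lemma rejected_div_eq_sum_update (hα : Monotone α) (hα₁ : 0 ≤ α 1) {i : Fin m}
    (hqi : 0 ≤ q i) :
    (if q i ≤ α (suR α q) then 1 else 0 : ℝ) / (max (suR α q) 1 : ℕ)
      = ∑ k ∈ Icc 1 m, if q i ≤ α k ∧ suR α (update q i 0) = k then (k : ℝ)⁻¹ else 0 := by
  have key : ∀ k ∈ Icc 1 m, q i ≤ α k → (suR α (update q i 0) = k ↔ suR α q = k) :=
    fun k hk => suR_update_zero_eq_iff hα hqi (hα₁.trans (hα (mem_Icc.1 hk).1))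
  by_cases hrej : q i ≤ α (suR α q)
  · have hR₁ := one_le_suR_of_le hα hrej
    have hR : suR α q ∈ Icc 1 m := mem_Icc.2 ⟨hR₁, suR_le α q⟩
    rw [if_pos hrej, max_eq_left hR₁, sum_eq_single_of_mem _ hR,
      if_pos ⟨hrej, (key _ hR hrej).2 rfl⟩, one_div]
    rintro k hk hkR
    exact if_neg fun ⟨hqk, hk'⟩ => hkR ((key k hk hqk).1 hk').symm
  · rw [if_neg hrej, zero_div]
    exact (sum_eq_zero fun k hk => if_neg fun ⟨hqk, hk'⟩ => hrej ((key k hk hqk).1 hk' ▸ hqk)).symm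

lemma fdp_suR_eq_sum_update (hα : Monotone α) (hα₁ : 0 ≤ α 1) (I0 : Finset (Fin m))
    (hq : ∀ i, 0 ≤ q i) :
    (#(I0.filter fun i => q i ≤ α (suR α q)) : ℝ) / (max (suR α q) 1 : ℕ)
      = ∑ i ∈ I0, ∑ k ∈ Icc 1 m,
          if q i ≤ α k ∧ suR α (update q i 0) = k then (k : ℝ)⁻¹ else 0 := by
  simp only [card_filter, Nat.cast_sum, Nat.cast_ite, Nat.cast_one, Nat.cast_zero, sum_div]
  exact sum_congr rfl fun i _ => rejected_div_eq_sum_update hα hα₁ (hq i)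

end StepUp

section Independence

variable {Ω β γ δ : Type*} {mΩ : MeasurableSpace Ω} [MeasurableSpace β] [MeasurableSpace γ]
  [MeasurableSpace δ] {μ : Measure Ω} [IsFiniteMeasure μ]

lemma ProbabilityTheory.IndepFun.indepFun_prodMk_of_prodMk {X : Ω → β} {Y : Ω → γ} {Z : Ω → δ}
    (hX : Measurable X) (hY : Measurable Y) (hZ : Measurable Z) (hXY : IndepFun X Y μ)
    (hXYZ : IndepFun (fun ω => (X ω, Y ω)) Z μ) : IndepFun X (fun ω => (Y ω, Z ω)) μ := by
  have hYZ : IndepFun Y Z μ := hXYZ.comp measurable_snd measurable_id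
  rw [indepFun_iff_map_prod_eq_prod_map_map hX.aemeasurable (hY.prodMk hZ).aemeasurable,
    hYZ.map_prod_eq_prod_map_map hY.aemeasurable hZ.aemeasurable, ← Measure.prodAssoc_prod,
    ← hXY.map_prod_eq_prod_map_map hX.aemeasurable hY.aemeasurable,
    ← hXYZ.map_prod_eq_prod_map_map (hX.prodMk hY).aemeasurable hZ.aemeasurable,
    Measure.map_map MeasurableEquiv.prodAssoc.measurable ((hX.prodMk hY).prodMk hZ)]
  rfl

variable {ι : Type*} [DecidableEq ι]

/-- With `Y` the other true-null coordinates and `Z` the false-null vector, `p i ⊥ Y` and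
`(p i, Y) ⊥ Z` give `p i ⊥ (Y, Z)`, and `update (p ω) i c` is a function of `(Y, Z)`. -/
lemma indepFun_update_of_iIndepFun {p : Ω → ι → β} {I0 : Finset ι}
    (hmeas : ∀ i, Measurable fun ω => p ω i)
    (hI01 : IndepFun (fun ω (i : I0) => p ω i) (fun ω (i : {i // i ∉ I0}) => p ω i) μ)
    (hI0 : iIndepFun (fun (i : I0) ω => p ω i) μ) {i : ι} (hi : i ∈ I0) (c : β) :
    IndepFun (fun ω => p ω i) (fun ω => update (p ω) i c) μ := by
  set i0 : I0 := ⟨i, hi⟩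
  set Y := fun ω (j : (univ.erase i0 : Finset I0)) => p ω j
  set Z := fun ω (j : {j // j ∉ I0}) => p ω j
  have hXY : IndepFun (fun ω => p ω i) Y μ := by
    have h := hI0.indepFun_finset {i0} (univ.erase i0) (by simp) fun j => hmeas j
    exact h.comp (measurable_pi_apply (⟨i0, mem_singleton_self i0⟩ : ({i0} : Finset I0)))
      measurable_id
  have hXYZ : IndepFun (fun ω => (p ω i, Y ω)) Z μ := by
    have hφ : Measurable fun v : I0 → β => (v i0, fun j : (univ.erase i0 : Finset I0) => v j) := by
      fun_prop
    exact hI01.comp hφ measurable_id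
  have hXYZ' := hXY.indepFun_prodMk_of_prodMk (hmeas i) (by fun_prop) (by fun_prop) hXYZ
  have hW : Measurable[MeasurableSpace.comap (fun ω => (Y ω, Z ω)) inferInstance]
      fun ω => update (p ω) i c := by
    refine @measurable_pi_lambda Ω ι (fun _ => β) (.comap (fun ω => (Y ω, Z ω)) inferInstance) _ _
      fun j => ?_
    rcases eq_or_ne j i with rfl | hji
    · simp only [update_self]
      exact measurable_const
    simp only [update_of_ne hji]
    by_cases hj : j ∈ I0
    · have hj' : (⟨j, hj⟩ : I0) ∈ univ.erase i0 := by simp [i0, hji]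
      exact (measurable_pi_apply (X := fun _ => β) (⟨_, hj'⟩ : (univ.erase i0 : Finset I0))).comp
        (measurable_fst.comp (comap_measurable fun ω => (Y ω, Z ω)))
    · exact (measurable_pi_apply (X := fun _ => β) (⟨j, hj⟩ : {j // j ∉ I0})).comp
        (measurable_snd.comp (comap_measurable fun ω => (Y ω, Z ω)))
  rw [IndepFun_iff_Indep] at hXYZ' ⊢
  exact indep_of_indep_of_le_right hXYZ' hW.comap_le

end Independence

lemma sum_mul_measureReal_fiber_div_le {Ω : Type*} [MeasurableSpace Ω] {μ : Measure Ω}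
    [IsProbabilityMeasure μ] {f : Ω → ℕ} (hf : Measurable f) {s : Finset ℕ} {a : ℕ → ℝ} {c : ℝ}
    (hc : 0 ≤ c) (ha : ∀ k ∈ s, 0 < k ∧ a k ≤ c * k) :
    ∑ k ∈ s, a k * μ.real (f ⁻¹' {k}) / k ≤ c := by
  calc ∑ k ∈ s, a k * μ.real (f ⁻¹' {k}) / k
      ≤ ∑ k ∈ s, c * μ.real (f ⁻¹' {k}) := sum_le_sum fun k hk => by
        obtain ⟨hk, hak⟩ := ha k hk
        rw [div_le_iff₀ (Nat.cast_pos.2 hk), mul_right_comm]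
        exact mul_le_mul_of_nonneg_right hak measureReal_nonneg
    _ = c * μ.real (f ⁻¹' s) := by
        rw [← mul_sum,
          sum_measureReal_preimage_singleton _ fun k _ => hf (measurableSet_singleton k)]
    _ ≤ c := mul_le_of_le_one_right hc measureReal_le_one

section FDR

variable {Ω : Type*} [MeasurableSpace Ω] {μ : Measure Ω} [IsFiniteMeasure μ] {m : ℕ}
  {α : ℕ → ℝ} {p : Ω → Fin m → ℝ}

theorem suFDR_eq_sum (hα : Monotone α) (hα₁ : 0 ≤ α 1) (I0 : Finset (Fin m))
    (hmeas : ∀ i, Measurable fun ω => p ω i) (hp : ∀ ω i, 0 ≤ p ω i)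
    (hindep : ∀ i ∈ I0, IndepFun (fun ω => p ω i) (fun ω => update (p ω) i 0) μ) :
    suFDR μ α p I0 = ∑ i ∈ I0, ∑ k ∈ Icc 1 m,
      μ.real {ω | p ω i ≤ α k} * μ.real {ω | suR α (update (p ω) i 0) = k} / k := by
  have hW : ∀ i, Measurable fun ω => update (p ω) i 0 := fun i => by fun_prop
  set E := fun i k => {ω | p ω i ≤ α k ∧ suR α (update (p ω) i 0) = k}
  have hE : ∀ i k, MeasurableSet (E i k) := fun i k =>
    (hmeas i measurableSet_Iic).inter ((measurable_suR α).comp (hW i) (measurableSet_singleton k))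
  have hfdp : ∀ ω, (#(I0.filter fun i => p ω i ≤ α (suR α (p ω))) : ℝ) / (max (suR α (p ω)) 1 : ℕ)
      = ∑ i ∈ I0, ∑ k ∈ Icc 1 m, (E i k).indicator (fun _ => (k : ℝ)⁻¹) ω := fun ω => by
    simp only [fdp_suR_eq_sum_update hα hα₁ I0 (hp ω), Set.indicator_apply, E, Set.mem_ofPred_eq]
  simp only [suFDR, FDR, hfdp]
  rw [integral_finsetSum _ fun i _ => integrable_finsetSum _ fun k _ =>
    (integrable_const _).indicator (hE i k)]
  refine sum_congr rfl fun i hi => ?_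
  rw [integral_finsetSum _ fun k _ => (integrable_const _).indicator (hE i k)]
  refine sum_congr rfl fun k _ => ?_
  rw [integral_indicator_const _ (hE i k), smul_eq_mul, div_eq_mul_inv]
  congr 1
  simp only [measureReal_def, ← ENNReal.toReal_mul]
  exact congrArg ENNReal.toReal ((hindep i hi).measure_inter_preimage_eq_mul _ _
    measurableSet_Iic ((measurable_suR α) (measurableSet_singleton k)))

end FDR

theorem bh_stepup_fdr_control_general
    {Ω : Type*} [MeasurableSpace Ω] (μ : Measure Ω) [IsProbabilityMeasure μ]
    (m : ℕ) (α : ℝ) (hα : α ∈ Set.Ioo (0:ℝ) 1)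
    (I0 : Finset (Fin m)) (p : Ω → Fin m → ℝ)
    (hmeas : ∀ i, Measurable (fun ω => p ω i))
    (hrange : ∀ ω i, p ω i ∈ Set.Icc (0:ℝ) 1)
    -- (BI)(2): the true-null p-value vector is independent of the false-null one
    (hBI2 : IndepFun (fun ω (i : {i // i ∈ I0}) => p ω i)
      (fun ω (i : {i // i ∉ I0}) => p ω i) μ)
    -- (BI)(3): the true-null p-values are jointly independent ...
    (hBI3 : iIndepFun (fun (i : {i // i ∈ I0}) ω => p ω i.1) μ)
    -- ... and stochastically larger than (or equal to) the uniform distribution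
    (hstoch : ∀ i ∈ I0, ∀ x ∈ Set.Icc (0:ℝ) 1, μ {ω | p ω i ≤ x} ≤ ENNReal.ofReal x) :
    suFDR μ (bh m α) p I0 ≤ (I0.card : ℝ) / m * α := by
  obtain ⟨hα₀, hα₁⟩ := hα
  have hbh_mono : Monotone (bh m α) := fun j k hjk => by unfold bh; gcongr
  have hbh_mem : ∀ k ∈ Icc 1 m, bh m α k ∈ Set.Icc (0 : ℝ) 1 := fun k hk => by
    obtain ⟨hk₁, hkm⟩ : (1 : ℝ) ≤ k ∧ (k : ℝ) ≤ m := by simpa using hk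
    refine ⟨by unfold bh; positivity, ?_⟩
    rw [bh, div_le_one (by linarith)]
    nlinarith
  have hnull : ∀ i ∈ I0, ∀ k ∈ Icc 1 m, μ.real {ω | p ω i ≤ bh m α k} ≤ α / m * k :=
    fun i hi k hk => (ENNReal.toReal_le_of_le_ofReal (hbh_mem k hk).1
      (hstoch i hi _ (hbh_mem k hk))).trans_eq (by rw [bh]; ring)
  rw [suFDR_eq_sum hbh_mono (by unfold bh; positivity) I0 hmeas (fun ω i => (hrange ω i).1)
    fun i hi => indepFun_update_of_iIndepFun hmeas hBI2 hBI3 hi 0]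
  calc _ ≤ ∑ _i ∈ I0, α / m := sum_le_sum fun i hi =>
        sum_mul_measureReal_fiber_div_le ((measurable_suR _).comp (by fun_prop))
          (by positivity) fun k hk => ⟨(mem_Icc.1 hk).1, hnull i hi k hk⟩
    _ = (I0.card : ℝ) / m * α := by rw [sum_const, nsmul_eq_mul]; ring

/-- The Benjamini–Hochberg step-up test controls the FDR:
under the basic independence assumptions (BI)(1)-(3), `FDR ≤ (m₀/m)·α`. -/
theorem bh_stepup_fdr_control
    {Ω : Type*} [MeasurableSpace Ω] (μ : Measure Ω) [IsProbabilityMeasure μ]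
    (m : ℕ) (hm : 1 ≤ m) (α : ℝ) (hα : α ∈ Set.Ioo (0:ℝ) 1)
    (I0 : Finset (Fin m)) (p : Ω → Fin m → ℝ)
    (hmeas : ∀ i, Measurable (fun ω => p ω i))
    (hrange : ∀ ω i, p ω i ∈ Set.Icc (0:ℝ) 1)
    -- (BI)(2): the true-null p-value vector is independent of the false-null one
    (hBI2 : IndepFun (fun ω (i : {i // i ∈ I0}) => p ω i)
      (fun ω (i : {i // i ∉ I0}) => p ω i) μ)
    -- (BI)(3): the true-null p-values are jointly independent ...
    (hBI3 : iIndepFun (fun (i : {i // i ∈ I0}) ω => p ω i.1) μ)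
    -- ... and stochastically larger than (or equal to) the uniform distribution
    (hstoch : ∀ i ∈ I0, ∀ x ∈ Set.Icc (0:ℝ) 1, μ {ω | p ω i ≤ x} ≤ ENNReal.ofReal x) :
    suFDR μ (bh m α) p I0 ≤ (I0.card : ℝ) / m * α :=
  bh_stepup_fdr_control_general μ m α hα I0 p hmeas hrange hBI2 hBI3 hstoch
end
end

section
/- For the step-down test the number of rejections computed with data-dependent critical values a_i = b_{m·F̂_m(p_{i:m})} depends only on comparisons at the inspection points j ∈ {m·F̂_m(p_{i:m}) : i = 1,…,m}; i.e., R = max{j : p_{i:m} ≤ a_i for all i ≤ j} equals max{j in the set of inspection points : p_{i:m} ≤ a_i for all i ≤ j}, even when tied p-values are present. -/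
open MeasureTheory ProbabilityTheory Finset
open scoped Classical
noncomputable section

/-!
Since `p_{i:m} ≤ t ↔ i ≤ m·F̂_m(t)`, the tie block of `p_{j:m}` ends at the inspection point
`J = m·F̂_m(p_{j:m}) ≥ j`, and `p_{i:m} = p_{j:m}` for `j ≤ i ≤ J`. The condition
`p_{i:m} ≤ a_i` depends on `i` only through `p_{i:m}`, so if it holds for all `i ≤ j` it holds
for all `i ≤ J`. Every admissible `j` is thus dominated by an admissible inspection point.
-/

theorem Finset.sup_id_eq_of_subset_of_forall_le {α : Type*} [SemilatticeSup α] [OrderBot α]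
    {A B : Finset α} (hBA : B ⊆ A) (h : ∀ a ∈ A, a ≠ ⊥ → ∃ b ∈ B, a ≤ b) :
    A.sup id = B.sup id := by
  refine le_antisymm (Finset.sup_le fun a ha => ?_) (Finset.sup_mono hBA)
  rcases eq_or_ne a ⊥ with rfl | ha0
  · exact bot_le
  · obtain ⟨b, hb, hab⟩ := h a ha ha0
    exact hab.trans (Finset.le_sup (f := id) hb)

theorem Finset.max_unbotD_zero_eq_sup_id (s : Finset ℕ) : s.max.unbotD 0 = s.sup id := by
  rcases s.eq_empty_or_nonempty with rfl | hs
  · simp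
  · rw [← Finset.coe_max' hs, WithBot.unbotD_coe, Finset.max'_eq_sup', Finset.sup'_eq_sup]

section OrderStatistics

variable {m : ℕ} (p : Fin m → ℝ)

theorem countLE_mono_s16 : Monotone (countLE p) := fun _ _ hst =>
  Finset.card_le_card (Finset.monotone_filter_right _ fun _ _ hi => hi.trans hst)

theorem countLE_le (t : ℝ) : countLE p t ≤ m := by
  simpa [countLE] using Finset.card_filter_le Finset.univ (fun i => p i ≤ t)

theorem exists_countLE_apply_eq {t : ℝ} (ht : 0 < countLE p t) :
    ∃ k, p k ≤ t ∧ countLE p (p k) = countLE p t := by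
  obtain ⟨k, hk, hmax⟩ := Finset.exists_max_image _ p (Finset.card_pos.mp ht)
  refine ⟨k, (Finset.mem_filter.1 hk).2, le_antisymm (countLE_mono_s16 p (Finset.mem_filter.1 hk).2) ?_⟩
  refine Finset.card_le_card fun j hj => ?_
  simp only [Finset.mem_filter, Finset.mem_univ, true_and] at hj ⊢
  exact hmax j (by simpa using hj)

theorem exists_setOf_le_countLE_eq_Ici {i : ℕ} (hi : 1 ≤ i) (him : i ≤ m) :
    ∃ k, {t | i ≤ countLE p t} = Set.Ici (p k) := by
  have hT : (Finset.univ.filter fun k => i ≤ countLE p (p k)).Nonempty := by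
    obtain ⟨k, -, hk⟩ := Finset.univ.exists_max_image p ⟨⟨0, by omega⟩, Finset.mem_univ _⟩
    refine ⟨k, Finset.mem_filter.2 ⟨Finset.mem_univ _, ?_⟩⟩
    simpa [countLE, hk] using him
  obtain ⟨k, hk, hmin⟩ := Finset.exists_min_image _ p hT
  refine ⟨k, Set.ext fun t => ⟨fun ht => ?_, fun ht => ?_⟩⟩
  · obtain ⟨k', hk't, hk'⟩ := exists_countLE_apply_eq p (Nat.lt_of_lt_of_le hi ht)
    exact (hmin k' (by simpa [hk'] using ht)).trans hk't
  · exact (Finset.mem_filter.1 hk).2.trans (countLE_mono_s16 p ht)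

variable {p}

theorem exists_orderStat_eq {i : ℕ} (hi : 1 ≤ i) (him : i ≤ m) : ∃ k, orderStat p i = p k := by
  obtain ⟨k, hk⟩ := exists_setOf_le_countLE_eq_Ici p hi him
  exact ⟨k, by rw [orderStat, hk, csInf_Ici]⟩

theorem orderStat_le_iff_s16 {i : ℕ} (hi : 1 ≤ i) (him : i ≤ m) (t : ℝ) :
    orderStat p i ≤ t ↔ i ≤ countLE p t := by
  obtain ⟨k, hk⟩ := exists_setOf_le_countLE_eq_Ici p hi him
  rw [orderStat, hk, csInf_Ici, ← Set.mem_Ici, ← hk, Set.mem_ofPred_eq]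

theorem le_countLE_orderStat {i : ℕ} (hi : 1 ≤ i) (him : i ≤ m) :
    i ≤ countLE p (orderStat p i) :=
  (orderStat_le_iff_s16 hi him _).1 le_rfl

theorem orderStat_eq_of_le_countLE {i j : ℕ} (hj : 1 ≤ j) (hjm : j ≤ m) (hji : j ≤ i)
    (hi : i ≤ countLE p (orderStat p j)) : orderStat p i = orderStat p j := by
  have him : i ≤ m := hi.trans (countLE_le p _)
  refine le_antisymm ((orderStat_le_iff_s16 (hj.trans hji) him _).2 hi) ?_
  exact (orderStat_le_iff_s16 hj hjm _).2 (hji.trans (le_countLE_orderStat (hj.trans hji) him))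

theorem forall_Icc_countLE_orderStat {φ : ℝ → Prop} {j : ℕ} (hj : 1 ≤ j) (hjm : j ≤ m)
    (h : ∀ i ∈ Finset.Icc 1 j, φ (orderStat p i)) :
    ∀ i ∈ Finset.Icc 1 (countLE p (orderStat p j)), φ (orderStat p i) := by
  intro i hi
  rcases le_or_gt i j with hij | hji
  · exact h i (Finset.mem_Icc.2 ⟨(Finset.mem_Icc.1 hi).1, hij⟩)
  · rw [orderStat_eq_of_le_countLE hj hjm hji.le (Finset.mem_Icc.1 hi).2]
    exact h j (Finset.mem_Icc.2 ⟨hj, le_rfl⟩)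

end OrderStatistics

theorem sd_data_dependent_inspection_points_general
    {m : ℕ} (α : ℝ)
    (p : Fin m → ℝ) :
    (((Finset.range (m+1)).filter
        (fun j => ∀ i ∈ Finset.Icc 1 j,
          orderStat p i ≤ bh m α (countLE p (orderStat p i)))).max).unbotD 0
      =
    (((Finset.univ.image (fun i : Fin m => countLE p (p i))).filter
        (fun j => ∀ i ∈ Finset.Icc 1 j,
          orderStat p i ≤ bh m α (countLE p (orderStat p i)))).max).unbotD 0 := by
  rw [Finset.max_unbotD_zero_eq_sup_id, Finset.max_unbotD_zero_eq_sup_id]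
  refine Finset.sup_id_eq_of_subset_of_forall_le (fun J hJ => ?_) fun j hj hj0 => ?_
  · simp only [Finset.mem_filter, Finset.mem_image, Finset.mem_range] at hJ ⊢
    obtain ⟨⟨i, -, rfl⟩, hadm⟩ := hJ
    exact ⟨Nat.lt_succ_of_le (countLE_le p _), hadm⟩
  · simp only [Finset.mem_filter, Finset.mem_image, Finset.mem_range] at hj ⊢
    obtain ⟨hjm, hadm⟩ := hj
    have hj1 : 1 ≤ j := Nat.one_le_iff_ne_zero.2 hj0
    have hjm : j ≤ m := Nat.le_of_lt_succ hjm
    obtain ⟨k, hk⟩ := exists_orderStat_eq hj1 hjm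
    refine ⟨countLE p (orderStat p j), ⟨⟨k, Finset.mem_univ _, by rw [hk]⟩, ?_⟩,
      le_countLE_orderStat hj1 hjm⟩
    exact forall_Icc_countLE_orderStat (φ := fun t => t ≤ bh m α (countLE p t)) hj1 hjm hadm

/-- For the step-down test with data-dependent critical values
`a_i = b_{m·F̂_m(p_{i:m})}` (with BH values `b_j = jα/m`), the rejection number
only relies on the inspection points `j ∈ {m·F̂_m(p_{i:m}) : i = 1,…,m}`: the
maximum over all `j ≤ m` equals the maximum over the inspection points, even in
the presence of tied p-values. -/
theorem sd_data_dependent_inspection_points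
    {m : ℕ} (hm : 1 ≤ m) (α : ℝ) (hα : α ∈ Set.Ioo (0:ℝ) 1)
    (p : Fin m → ℝ) (hp : ∀ i, p i ∈ Set.Icc (0:ℝ) 1) :
    (((Finset.range (m+1)).filter
        (fun j => ∀ i ∈ Finset.Icc 1 j,
          orderStat p i ≤ bh m α (countLE p (orderStat p i)))).max).unbotD 0
      =
    (((Finset.univ.image (fun i : Fin m => countLE p (p i))).filter
        (fun j => ∀ i ∈ Finset.Icc 1 j,
          orderStat p i ≤ bh m α (countLE p (orderStat p i)))).max).unbotD 0 :=
  sd_data_dependent_inspection_points_general α p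
end
end
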